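/- arXiv:2505.07706 — 4 statements merged into one kernel-verified Lean document; each statement's English description precedes it below -/
import Mathlib

section
/- If C ⊆ {0,1,2}^n is a code of size T such that every three distinct codewords triffer in at least m positions, then m·C(T,3) ≤ (n/27)·T^3. In particular, for fixed λ > 2/9 and m ≥ λn, the size T of any m-trifferent code of length n is bounded by a constant depending only on λ. -/
/-- Three ternary words `a`, `b`, `c` triffer at position `i` if their `i`-th
coordinates take all three values `0, 1, 2`. -/
def Triffers {n : ℕ} (a b c : Fin n → Fin 3) (i : Fin n) : Prop :=
  ({a i, b i, c i} : Finset (Fin 3)) = Finset.univ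

instance {n : ℕ} (a b c : Fin n → Fin 3) (i : Fin n) : Decidable (Triffers a b c i) := by
  unfold Triffers; infer_instance

/-- The number of positions where `a`, `b`, `c` triffer. -/
def trifferCount {n : ℕ} (a b c : Fin n → Fin 3) : ℕ :=
  (Finset.univ.filter fun i => Triffers a b c i).card

/-- A code is `m`-trifferent if every three distinct codewords triffer in at
least `m` positions. -/
def IsTrifferent {n : ℕ} (m : ℕ) (C : Finset (Fin n → Fin 3)) : Prop :=
  ∀ a ∈ C, ∀ b ∈ C, ∀ c ∈ C, a ≠ b → a ≠ c → b ≠ c → m ≤ trifferCount a b c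

/-- `T n m` is the maximum size of an `m`-trifferent code of length `n`. -/
noncomputable def T (n m : ℕ) : ℕ :=
  sSup {k | ∃ C : Finset (Fin n → Fin 3), IsTrifferent m C ∧ C.card = k}

/-!
Double count the pairs (ordered triple of codewords, coordinate at which the triple triffers).
Each of the `T(T-1)(T-2) = 6·C(T,3)` triples of distinct codewords contributes at least `m`.
At a fixed coordinate `i`, if `r, s, t` codewords have `i`-th entry `0, 1, 2`, exactly
`6rst ≤ 6(r+s+t)³/27 = 6T³/27` triples triffer there. Hence `6m·C(T,3) ≤ 6nT³/27`.
If `m ≥ λn` with `λ > 2/9`, dividing by `n` leaves `(9λ/2)(T-1)(T-2) ≤ T²`, which forces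
`T < 27λ/(9λ-2)`.
-/

open Finset

namespace Finset

variable {α β : Type*} [Fintype β] [DecidableEq β]

theorem sum_comp_eq_sum_card_filter_mul (s : Finset α) (f : α → β) (h : β → ℕ) :
    ∑ a ∈ s, h (f a) = ∑ v, #{a ∈ s | f a = v} * h v := by
  rw [← sum_fiberwise s f]
  exact sum_congr rfl fun v _ => sum_const_nat fun a ha => by rw [(mem_filter.1 ha).2]

theorem sum_sum_sum_comp_eq (s : Finset α) (f : α → β) (g : β → β → β → ℕ) :
    ∑ a ∈ s, ∑ b ∈ s, ∑ c ∈ s, g (f a) (f b) (f c) =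
      ∑ x, ∑ y, ∑ z, #{a ∈ s | f a = x} * #{a ∈ s | f a = y} * #{a ∈ s | f a = z} *
        g x y z := by
  rw [sum_comp_eq_sum_card_filter_mul s f fun x => ∑ b ∈ s, ∑ c ∈ s, g x (f b) (f c)]
  refine sum_congr rfl fun x _ => ?_
  rw [sum_comp_eq_sum_card_filter_mul s f fun y => ∑ c ∈ s, g x y (f c), mul_sum]
  refine sum_congr rfl fun y _ => ?_
  rw [sum_comp_eq_sum_card_filter_mul s f (g x y), mul_sum, mul_sum]
  simp only [mul_assoc]

end Finset

theorem twentySeven_mul_mul_le_add_add_pow_three {R : Type*} [CommRing R] [LinearOrder R]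
    [IsStrictOrderedRing R] {r s t : R} (hr : 0 ≤ r) (hs : 0 ≤ s) (ht : 0 ≤ t) :
    27 * (r * s * t) ≤ (r + s + t) ^ 3 := by
  nlinarith [mul_nonneg hr (sq_nonneg (s - t)), mul_nonneg hs (sq_nonneg (r - t)),
    mul_nonneg ht (sq_nonneg (r - s)), mul_nonneg (add_nonneg (add_nonneg hr hs) ht)
      (add_nonneg (add_nonneg (sq_nonneg (r - s)) (sq_nonneg (s - t))) (sq_nonneg (r - t)))]

variable {n m : ℕ}

theorem sum_ite_triffers_eq (C : Finset (Fin n → Fin 3)) (i : Fin n) :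
    ∑ a ∈ C, ∑ b ∈ C, ∑ c ∈ C, (if Triffers a b c i then 1 else 0) =
      6 * (#{a ∈ C | a i = 0} * #{a ∈ C | a i = 1} * #{a ∈ C | a i = 2}) := by
  refine (sum_sum_sum_comp_eq C (· i)
    fun x y z => if ({x, y, z} : Finset (Fin 3)) = univ then 1 else 0).trans ?_
  simp +decide only [Fin.sum_univ_three, if_true, if_false]
  ring

theorem sum_card_filter_apply_eq (C : Finset (Fin n → Fin 3)) (i : Fin n) :
    #{a ∈ C | a i = 0} + #{a ∈ C | a i = 1} + #{a ∈ C | a i = 2} = #C := by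
  rw [eq_comm, card_eq_sum_card_fiberwise (f := (· i)) (t := univ) fun _ _ => mem_univ _,
    Fin.sum_univ_three]

theorem sum_trifferCount_le (C : Finset (Fin n → Fin 3)) :
    27 * ∑ a ∈ C, ∑ b ∈ C, ∑ c ∈ C, trifferCount a b c ≤ n * (6 * #C ^ 3) := by
  have h_swap : ∑ a ∈ C, ∑ b ∈ C, ∑ c ∈ C, trifferCount a b c =
      ∑ i, ∑ a ∈ C, ∑ b ∈ C, ∑ c ∈ C, (if Triffers a b c i then 1 else 0) := by
    simp only [trifferCount, card_filter, sum_comm (s := C) (t := (univ : Finset (Fin n)))]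
  rw [h_swap, mul_sum]
  refine (sum_le_sum fun i _ => ?_).trans_eq (by simp : ∑ _i : Fin n, 6 * #C ^ 3 = _)
  rw [sum_ite_triffers_eq, ← sum_card_filter_apply_eq C i]
  have := twentySeven_mul_mul_le_add_add_pow_three (Int.natCast_nonneg #{a ∈ C | a i = 0})
    (Int.natCast_nonneg #{a ∈ C | a i = 1}) (Int.natCast_nonneg #{a ∈ C | a i = 2})
  norm_cast at this
  linarith

theorem IsTrifferent.mul_descFactorial_le_sum_trifferCount {C : Finset (Fin n → Fin 3)}
    (hC : IsTrifferent m C) :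
    m * (#C).descFactorial 3 ≤ ∑ a ∈ C, ∑ b ∈ C, ∑ c ∈ C, trifferCount a b c := calc
  m * (#C).descFactorial 3 = ∑ a ∈ C, ∑ b ∈ C.erase a, (#C - 2) * m := by
    rw [sum_const_nat fun a ha => by rw [sum_const, card_erase_of_mem ha, smul_eq_mul],
      Nat.descFactorial_succ, Nat.descFactorial_succ, Nat.descFactorial_one]
    ring
  _ = ∑ a ∈ C, ∑ b ∈ C.erase a, ∑ _c ∈ (C.erase a).erase b, m :=
    sum_congr rfl fun a ha => sum_congr rfl fun b hb => by
      rw [sum_const, card_erase_of_mem hb, card_erase_of_mem ha, Nat.sub_sub, smul_eq_mul]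
  _ ≤ ∑ a ∈ C, ∑ b ∈ C.erase a, ∑ c ∈ (C.erase a).erase b, trifferCount a b c := by
    refine sum_le_sum fun a ha => sum_le_sum fun b hb => sum_le_sum fun c hc => ?_
    simp only [mem_erase] at hb hc
    exact hC a ha b hb.2 c hc.2.2 hb.1.symm hc.2.1.symm hc.1.symm
  _ ≤ ∑ a ∈ C, ∑ b ∈ C, ∑ c ∈ C, trifferCount a b c := by
    refine sum_le_sum fun a _ => (sum_le_sum_of_subset (erase_subset a C)).trans' ?_
    exact sum_le_sum fun b _ => sum_le_sum_of_subset ((erase_subset _ _).trans (erase_subset _ _))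

theorem IsTrifferent.mul_choose_three_le {C : Finset (Fin n → Fin 3)} (hC : IsTrifferent m C) :
    27 * m * (#C).choose 3 ≤ n * #C ^ 3 := by
  refine Nat.le_of_mul_le_mul_left ?_ (by norm_num : 0 < 6)
  calc 6 * (27 * m * (#C).choose 3) = 27 * (m * (#C).descFactorial 3) := by
        rw [Nat.descFactorial_eq_factorial_mul_choose, Nat.factorial]; ring
    _ ≤ 27 * ∑ a ∈ C, ∑ b ∈ C, ∑ c ∈ C, trifferCount a b c :=
        Nat.mul_le_mul_left 27 hC.mul_descFactorial_le_sum_trifferCount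
    _ ≤ n * (6 * #C ^ 3) := sum_trifferCount_le C
    _ = 6 * (n * #C ^ 3) := by ring

theorem lt_of_mul_choose_three_le {lam : ℝ} (hlam : 2 / 9 < lam) {k : ℕ}
    (h : 27 * lam * k.choose 3 ≤ k ^ 3) : (k : ℝ) < 27 * lam / (9 * lam - 2) := by
  have h_choose : (k.choose 3 : ℝ) * 6 = k * (k - 1) * (k - 2) := by
    rw [Nat.cast_choose_eq_descPochhammer_div]
    simp [descPochhammer_succ_eval, Nat.factorial]
  rw [lt_div_iff₀ (by linarith)]
  -- below 3 the bound holds outright; from 3 on, `h` divided by `3k` reads `9λ(k-1)(k-2) ≤ 2k²`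
  rcases lt_or_ge (k : ℝ) 3 with ht | ht
  · nlinarith
  · nlinarith

theorem IsTrifferent.card_lt {lam : ℝ} (hlam : 2 / 9 < lam) {C : Finset (Fin n → Fin 3)}
    (hm : lam * n ≤ m) (hC : IsTrifferent m C) : (#C : ℝ) < 27 * lam / (9 * lam - 2) := by
  refine lt_of_mul_choose_three_le hlam ?_
  rcases n.eq_zero_or_pos with rfl | hn
  · have h_card : #C < 3 := by
      have := (card_le_univ C).trans_eq Fintype.card_unique
      omega
    simp [Nat.choose_eq_zero_of_lt h_card]
  have hn : (0 : ℝ) < n := Nat.cast_pos.2 hn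
  refine le_of_mul_le_mul_left ?_ hn
  calc (n : ℝ) * (27 * lam * (#C).choose 3) = 27 * (lam * n) * (#C).choose 3 := by ring
    _ ≤ 27 * m * (#C).choose 3 := by gcongr
    _ ≤ n * #C ^ 3 := by exact_mod_cast hC.mul_choose_three_le

theorem stmt5 :
    (∀ (n m : ℕ) (C : Finset (Fin n → Fin 3)), IsTrifferent m C →
        27 * m * (C.card.choose 3) ≤ n * C.card ^ 3) ∧
    (∀ lam : ℝ, 2 / 9 < lam → ∃ c : ℕ, ∀ (n m : ℕ) (C : Finset (Fin n → Fin 3)),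
        lam * n ≤ (m : ℝ) → IsTrifferent m C → C.card ≤ c) :=
  ⟨fun _ _ _ hC => hC.mul_choose_three_le, fun lam hlam =>
    ⟨⌈27 * lam / (9 * lam - 2)⌉₊, fun _ _ _ hm hC =>
      Nat.cast_le.1 ((hC.card_lt hlam hm).le.trans (Nat.le_ceil _))⟩⟩
end

section
/- For all n ≥ 2, T(n, 2) ≤ (10/n)·(3/2)^n, where T(n,2) is the maximum size of a 2-trifferent ternary code of length n. -/
/-!
Double count the pairs `(x, w)` with `x ∈ C` and `w` agreeing with `x` in at most one coordinate.
Each `x` has at least `n 2^(n-1)` partners `w` (those agreeing with `x` exactly once). Each `w` has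
at most five partners in `C`: three codewords can triffer only where one of them agrees with `w`.
Among six partners `S` of `w`, pick `p`; pigeonhole gives `u₁, u₂, u₃ ∈ S` coinciding wherever `p`
agrees with `w`. Then every triple `p, uₖ, uₗ` must triffer at the agreement positions of `uₖ` and
`uₗ`, which forces the values of the third word there, and `u₁, u₂, u₃` triffer nowhere.
-/

open Finset

section

variable {n : ℕ}

def agreeSet (x w : Fin n → Fin 3) : Finset (Fin n) := {i | x i = w i}

@[simp]
lemma mem_agreeSet {x w : Fin n → Fin 3} {i : Fin n} : i ∈ agreeSet x w ↔ x i = w i := by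
  simp [agreeSet]

section Triffers

variable {a b c d : Fin n → Fin 3} {i : Fin n}

lemma triffers_iff : Triffers a b c i ↔ a i ≠ b i ∧ a i ≠ c i ∧ b i ≠ c i := by
  unfold Triffers
  generalize a i = x, b i = y, c i = z
  revert x y z
  decide

lemma Triffers.exists_eq (h : Triffers a b c i) (s : Fin 3) : a i = s ∨ b i = s ∨ c i = s := by
  have key : ∀ x y z s : Fin 3, x ≠ y → x ≠ z → y ≠ z → x = s ∨ y = s ∨ z = s := by decide
  obtain ⟨hab, hac, hbc⟩ := triffers_iff.mp h
  exact key _ _ _ s hab hac hbc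

lemma Triffers.eq_of_triffers (h : Triffers a b c i) (h' : Triffers a b d i) : c i = d i := by
  have key : ∀ x y z w : Fin 3, x ≠ y → x ≠ z → y ≠ z → x ≠ w → y ≠ w → z = w := by decide
  obtain ⟨hab, hac, hbc⟩ := triffers_iff.mp h
  obtain ⟨-, had, hbd⟩ := triffers_iff.mp h'
  exact key _ _ _ _ hab hac hbc had hbd

end Triffers

lemma card_piFinset_agree_only_at (x : Fin n → Fin 3) (j : Fin n) :
    #(Fintype.piFinset fun i => if i = j then {x i} else univ.erase (x i)) = 2 ^ (n - 1) := by
  simp [apply_ite card, Finset.prod_ite, Finset.filter_ne']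

namespace IsTrifferent

variable {C : Finset (Fin n → Fin 3)} {a b c : Fin n → Fin 3}

lemma two_le_card_of_triffers_mem (hC : IsTrifferent 2 C) (ha : a ∈ C) (hb : b ∈ C) (hc : c ∈ C)
    (hab : a ≠ b) (hac : a ≠ c) (hbc : b ≠ c) {s : Finset (Fin n)}
    (hs : ∀ i, Triffers a b c i → i ∈ s) : 2 ≤ #s :=
  (hC a ha b hb c hc hab hac hbc).trans <| card_le_card fun i hi => hs i (mem_filter.mp hi).2

lemma exists_triffers (hC : IsTrifferent 2 C) (ha : a ∈ C) (hb : b ∈ C) (hc : c ∈ C)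
    (hab : a ≠ b) (hac : a ≠ c) (hbc : b ≠ c) : ∃ i, Triffers a b c i := by
  by_contra! h
  simpa using
    hC.two_le_card_of_triffers_mem ha hb hc hab hac hbc (s := ∅) fun i hi => (h i hi).elim

variable {v : Fin n → Fin 3}

lemma apply_ne_of_apply_eq (hC : IsTrifferent 2 C) (ha : a ∈ C) (hb : b ∈ C) (hc : c ∈ C)
    (hab : a ≠ b) (hac : a ≠ c) (hbc : b ≠ c) (ha₁ : #(agreeSet a v) ≤ 1)
    (hb₁ : #(agreeSet b v) ≤ 1) (hc₁ : #(agreeSet c v) ≤ 1) {i : Fin n} (hai : a i = v i) :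
    b i ≠ v i := by
  intro hbi
  have hs : ∀ k, Triffers a b c k → k ∈ agreeSet c v := by
    intro k hk
    obtain ⟨hab', -, -⟩ := triffers_iff.mp hk
    rcases hk.exists_eq (v k) with h | h | h
    · obtain rfl : k = i := card_le_one.mp ha₁ k (by simpa) i (by simpa)
      exact absurd (hai.trans hbi.symm) hab'
    · obtain rfl : k = i := card_le_one.mp hb₁ k (by simpa) i (by simpa)
      exact absurd (hai.trans hbi.symm) hab'
    · simpa
  have := hC.two_le_card_of_triffers_mem ha hb hc hab hac hbc hs
  omega

variable {p : Fin n → Fin 3}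

lemma triffers_of_apply_eq (hC : IsTrifferent 2 C) (hp : p ∈ C) (ha : a ∈ C) (hb : b ∈ C)
    (hpa : p ≠ a) (hpb : p ≠ b) (hab : a ≠ b) (ha₁ : #(agreeSet a v) ≤ 1)
    (hb₁ : #(agreeSet b v) ≤ 1) (hpv : ∀ k, p k = v k → a k = b k) {i : Fin n}
    (hai : a i = v i) : Triffers p a b i := by
  by_contra hi
  have hs : ∀ k, Triffers p a b k → k ∈ agreeSet b v := by
    intro k hk
    rcases hk.exists_eq (v k) with h | h | h
    · exact absurd (hpv k h) (triffers_iff.mp hk).2.2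
    · obtain rfl : k = i := card_le_one.mp ha₁ k (by simpa) i (by simpa)
      exact absurd hk hi
    · simpa
  have := hC.two_le_card_of_triffers_mem hp ha hb hpa hpb hab hs
  omega

variable {u₁ u₂ u₃ : Fin n → Fin 3}

lemma false_of_coincide (hC : IsTrifferent 2 C) (hp : p ∈ C) (h₁ : u₁ ∈ C) (h₂ : u₂ ∈ C)
    (h₃ : u₃ ∈ C) (hp₁ : p ≠ u₁) (hp₂ : p ≠ u₂) (hp₃ : p ≠ u₃) (h₁₂ : u₁ ≠ u₂) (h₁₃ : u₁ ≠ u₃)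
    (h₂₃ : u₂ ≠ u₃) (hu₁ : #(agreeSet u₁ v) ≤ 1) (hu₂ : #(agreeSet u₂ v) ≤ 1)
    (hu₃ : #(agreeSet u₃ v) ≤ 1)
    (hpv : ∀ k, p k = v k → u₁ k = u₂ k ∧ u₁ k = u₃ k ∧ u₂ k = u₃ k) : False := by
  obtain ⟨i, hi⟩ := hC.exists_triffers h₁ h₂ h₃ h₁₂ h₁₃ h₂₃
  obtain ⟨h₁₂i, h₁₃i, h₂₃i⟩ := triffers_iff.mp hi
  rcases hi.exists_eq (v i) with h | h | h
  · have t₂ := hC.triffers_of_apply_eq hp h₁ h₂ hp₁ hp₂ h₁₂ hu₁ hu₂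
      (fun k hk => (hpv k hk).1) h
    have t₃ := hC.triffers_of_apply_eq hp h₁ h₃ hp₁ hp₃ h₁₃ hu₁ hu₃
      (fun k hk => (hpv k hk).2.1) h
    exact h₂₃i (t₂.eq_of_triffers t₃)
  · have t₁ := hC.triffers_of_apply_eq hp h₂ h₁ hp₂ hp₁ h₁₂.symm hu₂ hu₁
      (fun k hk => (hpv k hk).1.symm) h
    have t₃ := hC.triffers_of_apply_eq hp h₂ h₃ hp₂ hp₃ h₂₃ hu₂ hu₃
      (fun k hk => (hpv k hk).2.2) h
    exact h₁₃i (t₁.eq_of_triffers t₃)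
  · have t₁ := hC.triffers_of_apply_eq hp h₃ h₁ hp₃ hp₁ h₁₃.symm hu₃ hu₁
      (fun k hk => (hpv k hk).2.1.symm) h
    have t₂ := hC.triffers_of_apply_eq hp h₃ h₂ hp₃ hp₂ h₂₃.symm hu₃ hu₂
      (fun k hk => (hpv k hk).2.2.symm) h
    exact h₁₂i (t₁.eq_of_triffers t₂)

theorem card_filter_agreeSet_le_one_le_five (hC : IsTrifferent 2 C) (v : Fin n → Fin 3) :
    #{x ∈ C | #(agreeSet x v) ≤ 1} ≤ 5 := by
  set S := {x ∈ C | #(agreeSet x v) ≤ 1}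
  have mem : ∀ {x}, x ∈ S → x ∈ C ∧ #(agreeSet x v) ≤ 1 := mem_filter.mp
  by_contra! hS
  obtain ⟨p, hpS⟩ : S.Nonempty := card_pos.mp (by omega)
  have hS' : 4 < #(S.erase p) := by rw [card_erase_of_mem hpS]; omega
  obtain ⟨u₁, u₂, u₃, hu₁, hu₂, hu₃, h₁₂, h₁₃, h₂₃, hpv⟩ : ∃ u₁ u₂ u₃, u₁ ∈ S.erase p ∧
      u₂ ∈ S.erase p ∧ u₃ ∈ S.erase p ∧ u₁ ≠ u₂ ∧ u₁ ≠ u₃ ∧ u₂ ≠ u₃ ∧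
      ∀ k, p k = v k → u₁ k = u₂ k ∧ u₁ k = u₃ k ∧ u₂ k = u₃ k := by
    rcases (agreeSet p v).eq_empty_or_nonempty with hp | ⟨j, hj⟩
    · obtain ⟨u₁, u₂, u₃, hu₁, hu₂, hu₃, h₁₂, h₁₃, h₂₃⟩ :=
        two_lt_card_iff.mp (show 2 < #(S.erase p) by omega)
      refine ⟨u₁, u₂, u₃, hu₁, hu₂, hu₃, h₁₂, h₁₃, h₂₃, fun k hk => ?_⟩
      simp [← mem_agreeSet, hp] at hk
    · -- the other words of `S` avoid `v j`, so three of them share a value at `j`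
      have hmaps : ∀ x ∈ S.erase p, x j ∈ univ.erase (v j) := by
        intro x hx
        obtain ⟨hxp, hxS⟩ := mem_erase.mp hx
        obtain ⟨z, hz, hzp⟩ := exists_mem_ne (show 1 < #(S.erase x) by
          rw [card_erase_of_mem hxS]; omega) p
        obtain ⟨hzx, hzS⟩ := mem_erase.mp hz
        refine mem_erase.mpr ⟨?_, mem_univ _⟩
        exact hC.apply_ne_of_apply_eq (mem hpS).1 (mem hxS).1 (mem hzS).1 hxp.symm hzp.symm
          hzx.symm (mem hpS).2 (mem hxS).2 (mem hzS).2 (mem_agreeSet.mp hj)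
      obtain ⟨w, -, hw⟩ := exists_lt_card_fiber_of_mul_lt_card_of_maps_to hmaps
        (n := 2) (by simpa using hS')
      obtain ⟨u₁, u₂, u₃, hu₁, hu₂, hu₃, h₁₂, h₁₃, h₂₃⟩ := two_lt_card_iff.mp hw
      rw [mem_filter] at hu₁ hu₂ hu₃
      refine ⟨u₁, u₂, u₃, hu₁.1, hu₂.1, hu₃.1, h₁₂, h₁₃, h₂₃, fun k hk => ?_⟩
      obtain rfl : k = j := card_le_one.mp (mem hpS).2 k (by simpa) j hj
      simp only [hu₁.2, hu₂.2, hu₃.2, and_self]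
  obtain ⟨hp₁, hu₁S⟩ := mem_erase.mp hu₁
  obtain ⟨hp₂, hu₂S⟩ := mem_erase.mp hu₂
  obtain ⟨hp₃, hu₃S⟩ := mem_erase.mp hu₃
  exact hC.false_of_coincide (mem hpS).1 (mem hu₁S).1 (mem hu₂S).1 (mem hu₃S).1 hp₁.symm
    hp₂.symm hp₃.symm h₁₂ h₁₃ h₂₃ (mem hu₁S).2 (mem hu₂S).2 (mem hu₃S).2 hpv

end IsTrifferent

lemma mul_two_pow_le_card_filter_agreeSet (x : Fin n → Fin 3) :
    n * 2 ^ (n - 1) ≤ #{w | #(agreeSet x w) ≤ 1} := by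
  set B : Fin n → Finset (Fin n → Fin 3) := fun j =>
    Fintype.piFinset fun i => if i = j then {x i} else univ.erase (x i)
  have mem_B : ∀ {w j}, w ∈ B j → ∀ i, (x i = w i ↔ i = j) := by
    intro w j hw i
    have := Fintype.mem_piFinset.mp hw i
    split_ifs at this with h <;> simp_all [eq_comm]
  have hdisj : ((univ : Finset (Fin n)) : Set (Fin n)).PairwiseDisjoint B := by
    intro j _ k _ hjk
    exact disjoint_left.mpr fun w hj hk => hjk ((mem_B hj k).mp ((mem_B hk k).mpr rfl)).symm
  have hsub : univ.biUnion B ⊆ ({w | #(agreeSet x w) ≤ 1} : Finset _) := by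
    intro w hw
    obtain ⟨j, -, hj⟩ := mem_biUnion.mp hw
    refine mem_filter.mpr ⟨mem_univ _, card_le_one.mpr fun i hi k hk => ?_⟩
    rw [mem_agreeSet, mem_B hj] at hi hk
    rw [hi, hk]
  calc n * 2 ^ (n - 1) = ∑ j, #(B j) := by
        simp only [B, card_piFinset_agree_only_at, sum_const, card_univ, Fintype.card_fin,
          smul_eq_mul]
    _ = #(univ.biUnion B) := (card_biUnion hdisj).symm
    _ ≤ _ := card_le_card hsub

lemma IsTrifferent.card_mul_le {C : Finset (Fin n → Fin 3)} (hC : IsTrifferent 2 C) :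
    #C * (n * 2 ^ (n - 1)) ≤ 3 ^ n * 5 := by
  simpa using card_mul_le_card_mul (fun x w => #(agreeSet x w) ≤ 1) (s := C) (t := univ)
    (fun x _ => mul_two_pow_le_card_filter_agreeSet x)
    (fun w _ => hC.card_filter_agreeSet_le_one_le_five w)

end

lemma exists_card_eq_T (n m : ℕ) : ∃ C : Finset (Fin n → Fin 3), IsTrifferent m C ∧ #C = T n m :=
  Nat.sSup_mem (s := {k | ∃ C : Finset (Fin n → Fin 3), IsTrifferent m C ∧ #C = k})
    ⟨0, ∅, by simp [IsTrifferent]⟩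
    ⟨3 ^ n, by rintro k ⟨C, -, rfl⟩; simpa using card_le_univ C⟩

theorem stmt6 (n : ℕ) (hn : 2 ≤ n) : (T n 2 : ℝ) ≤ 10 / n * (3 / 2) ^ n := by
  obtain ⟨C, hC, hCT⟩ := exists_card_eq_T n 2
  have hcount : (#C : ℝ) * (n * 2 ^ (n - 1)) ≤ 3 ^ n * 5 := by exact_mod_cast hC.card_mul_le
  have hpow : (2 : ℝ) ^ n = 2 * 2 ^ (n - 1) := by rw [← pow_succ']; congr 1; omega
  rw [← hCT, div_pow, div_mul_div_comm, le_div_iff₀ (by positivity), hpow]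
  nlinarith
end

section
/- Let S ⊆ {0,1,2}^n be the set of vectors with exactly 2ℓ coordinates equal to 2, and let C ⊆ S be a (2ℓ+1)-trifferent code. Define the bipartite graph G on two copies of the ℓ-element subsets of [n], with an edge (I₁, I₂) whenever some x ∈ C has {i : x_i = 2} = I₁ ∪ I₂ with I₁, I₂ disjoint of size ℓ. Then G contains no path on four vertices (P₄). -/
/-- The auxiliary bipartite relation: `Sum.inl I₁` is joined to `Sum.inr I₂` when some
codeword `x ∈ C` has its set of coordinates equal to `2` given by the disjoint union
`I₁ ∪ I₂` of two `ℓ`-element sets. -/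
def edgeRel {n : ℕ} (C : Finset (Fin n → Fin 3)) (ℓ : ℕ) :
    (Finset (Fin n) ⊕ Finset (Fin n)) → (Finset (Fin n) ⊕ Finset (Fin n)) → Prop
  | Sum.inl I₁, Sum.inr I₂ => ∃ x ∈ C, I₁.card = ℓ ∧ I₂.card = ℓ ∧ Disjoint I₁ I₂ ∧
      (Finset.univ.filter fun i => x i = 2) = I₁ ∪ I₂
  | _, _ => False

/-! A path `I – J – K – L` in the graph comes from codewords `x, y, z` whose sets of `2`s are
`I ∪ J`, `K ∪ J` and `K ∪ L`; as `I ≠ K` and `J ≠ L`, these codewords are distinct. In a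
triffering position exactly one of them is `2`, and it cannot be `y`, whose `2`s are covered by
those of `x` and `z`. So `x, y, z` triffer only inside `I ∪ L`, in at most `2ℓ` positions. -/

open Finset

lemma Finset.eq_of_subset_union_of_disjoint {α : Type*} [DecidableEq α] {s t u : Finset α}
    (hsub : s ⊆ t ∪ u) (hd : Disjoint s u) (hcard : #t ≤ #s) : s = t :=
  eq_of_subset_of_card_le (hd.left_le_of_le_sup_right hsub) hcard

lemma fin_three_cases_of_insert_eq_univ (v : Fin 3) :
    ∀ a b c : Fin 3, ({a, b, c} : Finset (Fin 3)) = univ →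
      (b = v ∧ a ≠ v ∧ c ≠ v) ∨ (b ≠ v ∧ (a = v ∨ c = v)) := by
  revert v; decide

lemma trifferCount_le_card_sdiff {n : ℕ} {x y z : Fin n → Fin 3} (v : Fin 3)
    (h : univ.filter (y · = v) ⊆ univ.filter (x · = v) ∪ univ.filter (z · = v)) :
    trifferCount x y z ≤
      #((univ.filter (x · = v) ∪ univ.filter (z · = v)) \ univ.filter (y · = v)) := by
  refine card_le_card fun i (hi : i ∈ univ.filter (Triffers x y z ·)) => ?_
  have hy := @h i
  simp only [mem_filter, mem_univ, true_and, mem_union, mem_sdiff] at hi hy ⊢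
  rcases fin_three_cases_of_insert_eq_univ v _ _ _ hi with ⟨hyi, hxi, hzi⟩ | ⟨hyi, hxzi⟩
  · exact absurd (hy hyi) (by tauto)
  · exact ⟨hxzi, hyi⟩

section edgeRel

variable {n ℓ : ℕ} {C : Finset (Fin n → Fin 3)}

@[simp] lemma not_edgeRel_inl_inl (I J : Finset (Fin n)) : ¬ edgeRel C ℓ (.inl I) (.inl J) :=
  id

@[simp] lemma not_edgeRel_inr_inr (I J : Finset (Fin n)) : ¬ edgeRel C ℓ (.inr I) (.inr J) :=
  id

@[simp] lemma not_edgeRel_inr_inl (I J : Finset (Fin n)) : ¬ edgeRel C ℓ (.inr I) (.inl J) :=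
  id

lemma edgeRel_inl_inr_comm {I J : Finset (Fin n)} :
    edgeRel C ℓ (.inl I) (.inr J) → edgeRel C ℓ (.inl J) (.inr I) := by
  rintro ⟨x, hx, hI, hJ, hIJ, hxIJ⟩
  exact ⟨x, hx, hJ, hI, hIJ.symm, hxIJ.trans (union_comm I J)⟩

lemma false_of_edgeRel_path (htr : IsTrifferent (2 * ℓ + 1) C) {I J K L : Finset (Fin n)}
    (hIJ : edgeRel C ℓ (.inl I) (.inr J)) (hKJ : edgeRel C ℓ (.inl K) (.inr J))
    (hKL : edgeRel C ℓ (.inl K) (.inr L)) (hIK : I ≠ K) (hJL : J ≠ L) : False := by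
  obtain ⟨x, hx, hI, hJ, -, sx⟩ := hIJ
  obtain ⟨y, hy, hK, -, dKJ, sy⟩ := hKJ
  obtain ⟨z, hz, -, hL, dKL, sz⟩ := hKL
  have hxy : x ≠ y := by
    rintro rfl
    refine hIK (eq_of_subset_union_of_disjoint ?_ dKJ (by rw [hI, hK])).symm
    rw [← sx, sy]
    exact subset_union_left
  have hxz : x ≠ z := by
    rintro rfl
    refine hIK (eq_of_subset_union_of_disjoint ?_ dKJ (by rw [hI, hK])).symm
    rw [← sx, sz]
    exact subset_union_left
  have hyz : y ≠ z := by
    rintro rfl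
    refine hJL (eq_of_subset_union_of_disjoint ?_ dKL.symm (by rw [hJ, hL])).symm
    rw [union_comm, ← sy, sz]
    exact subset_union_right
  have hmid : univ.filter (y · = 2) ⊆ univ.filter (x · = 2) ∪ univ.filter (z · = 2) := by
    rw [sx, sy, sz]
    intro i
    simp only [mem_union]
    tauto
  have hends :
      (univ.filter (x · = 2) ∪ univ.filter (z · = 2)) \ univ.filter (y · = 2) ⊆ I ∪ L := by
    rw [sx, sy, sz]
    intro i
    simp only [mem_union, mem_sdiff]
    tauto
  have hlower := htr x hx y hy z hz hxy hxz hyz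
  have hupper := (trifferCount_le_card_sdiff 2 hmid).trans <|
    (card_le_card hends).trans (card_union_le I L)
  omega

end edgeRel

theorem stmt8_general {n ℓ : ℕ} (C : Finset (Fin n → Fin 3))
    (htr : IsTrifferent (2 * ℓ + 1) C) :
    ∀ a b c d : Finset (Fin n) ⊕ Finset (Fin n),
      a ≠ b → a ≠ c → a ≠ d → b ≠ c → b ≠ d → c ≠ d →
      ¬((SimpleGraph.fromRel (edgeRel C ℓ)).Adj a b ∧
        (SimpleGraph.fromRel (edgeRel C ℓ)).Adj b c ∧
        (SimpleGraph.fromRel (edgeRel C ℓ)).Adj c d) := by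
  rintro a b c d - hac - - hbd - ⟨hab, hbc, hcd⟩
  rcases a with A | A <;> rcases b with B | B <;> rcases c with K | K <;> rcases d with D | D <;>
    simp only [SimpleGraph.fromRel_adj, not_edgeRel_inl_inl, not_edgeRel_inr_inr,
      not_edgeRel_inr_inl, or_false, false_or, and_false] at hab hbc hcd <;>
    simp only [ne_eq, Sum.inl.injEq, Sum.inr.injEq] at hac hbd
  · exact false_of_edgeRel_path htr hab.2 hbc.2 hcd.2 hac hbd
  · exact false_of_edgeRel_path htr (edgeRel_inl_inr_comm hab.2) (edgeRel_inl_inr_comm hbc.2)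
      (edgeRel_inl_inr_comm hcd.2) hac hbd

theorem stmt8 {n ℓ : ℕ} (C : Finset (Fin n → Fin 3))
    (hS : ∀ x ∈ C, (Finset.univ.filter fun i => x i = 2).card = 2 * ℓ)
    (htr : IsTrifferent (2 * ℓ + 1) C) :
    ∀ a b c d : Finset (Fin n) ⊕ Finset (Fin n),
      a ≠ b → a ≠ c → a ≠ d → b ≠ c → b ≠ d → c ≠ d →
      ¬((SimpleGraph.fromRel (edgeRel C ℓ)).Adj a b ∧
        (SimpleGraph.fromRel (edgeRel C ℓ)).Adj b c ∧
        (SimpleGraph.fromRel (edgeRel C ℓ)).Adj c d) :=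
  stmt8_general C htr
end

section
/- For 1 ≤ m < (2/9)n, T(n, m) ≥ (2√2/3)·2^{nh/2} − 1, where h = H(m/n, 2/9) = (m/n)·log₂((m/n)/(2/9)) + (1 − m/n)·log₂((1 − m/n)/(7/9)) is the relative entropy. (Proved by the alteration method: choose t = ⌊√2·2^{nh/2}⌋ random codewords and delete one codeword from each bad triple.) -/
/-!
Choose `t = ⌊√(2P)⌋` words independently and uniformly, where
`P = 2^{n h} = (α/p)^m ((1-α)/(1-p))^{n-m}` with `α = m/n`, `p = 2/9`. The positions at
which three fixed words triffer are independent events of probability `6/27 = 2/9`, so by the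
Chernoff bound a fixed triple triffers in fewer than `m` positions with probability at most
`1/P`, and the expected number of such bad triples is at most `C(t,3)/P ≤ t/3`. Deleting one
word from each bad triple of a sample attaining this leaves `2t/3` words; since a triple with a
repeated word never triffers, the survivors are distinct and form an `m`-trifferent code.
-/

open Finset Real

section Chernoff

variable {Ω : Type*} [Fintype Ω] [DecidableEq Ω]

theorem sum_pow_card_filter_mem {R : Type*} [CommSemiring R] (E : Finset Ω) (n : ℕ) (x : R) :
    ∑ ω : Fin n → Ω, x ^ #{i | ω i ∈ E} = (#E * x + #Eᶜ) ^ n := by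
  have hsingle : ∑ u : Ω, (if u ∈ E then x else 1) = #E * x + #Eᶜ := by
    simp [sum_ite, ← compl_filter]
  have hprod (ω : Fin n → Ω) : x ^ #{i | ω i ∈ E} = ∏ i, if ω i ∈ E then x else 1 := by
    rw [← prod_const, prod_filter]
  simp_rw [hprod, ← Fintype.prod_sum fun _ u ↦ if u ∈ E then x else 1, hsingle, prod_const,
    card_univ, Fintype.card_fin]

theorem card_filter_le_mul_pow_le_sum {ι : Type*} (s : Finset ι) (X : ι → ℕ) (m : ℕ) {x : ℝ}
    (hx0 : 0 ≤ x) (hx1 : x ≤ 1) :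
    #{i ∈ s | X i ≤ m} * x ^ m ≤ ∑ i ∈ s, x ^ X i := by
  calc #{i ∈ s | X i ≤ m} * x ^ m ≤ ∑ i ∈ s with X i ≤ m, x ^ X i := by
        rw [← nsmul_eq_mul]
        exact card_nsmul_le_sum _ _ _ fun i hi ↦ pow_le_pow_of_le_one hx0 hx1 (mem_filter.1 hi).2
    _ ≤ ∑ i ∈ s, x ^ X i :=
        sum_le_sum_of_subset_of_nonneg (filter_subset _ _) fun _ _ _ ↦ pow_nonneg hx0 _

theorem card_filter_card_mem_le_mul_le (E : Finset Ω) {n m : ℕ} {p : ℝ} (hm : 0 < m) (hmn : m < n)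
    (hE : (#E : ℝ) = p * Fintype.card Ω) (hmp : (m / n : ℝ) ≤ p) (hp : p < 1) :
    #{ω : Fin n → Ω | #{i | ω i ∈ E} ≤ m} *
        (((m / n : ℝ) / p) ^ m * ((1 - m / n : ℝ) / (1 - p)) ^ (n - m)) ≤
      (Fintype.card Ω : ℝ) ^ n := by
  set α : ℝ := m / n
  have hn : (0 : ℝ) < n := by exact_mod_cast hm.trans hmn
  have hα0 : 0 < α := div_pos (by exact_mod_cast hm) hn
  have hα1 : α < 1 := (div_lt_one hn).2 (by exact_mod_cast hmn)
  have hp0 : 0 < p := hα0.trans_le hmp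
  -- the tilt that optimizes the exponential moment
  set x : ℝ := α / p * ((1 - p) / (1 - α))
  have h1α : 0 < 1 - α := sub_pos.2 hα1
  have h1p : 0 < 1 - p := sub_pos.2 hp
  have hx0 : 0 < x := mul_pos (div_pos hα0 hp0) (div_pos h1p h1α)
  have hx1 : x ≤ 1 := by
    rw [show x = α * (1 - p) / (p * (1 - α)) from div_mul_div_comm .., div_le_one (by positivity)]
    nlinarith
  have hmgf : (#E * x + #Eᶜ : ℝ) = Fintype.card Ω * ((1 - p) / (1 - α)) := by
    rw [card_compl, Nat.cast_sub (card_le_univ E), hE]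
    simp only [x]
    field_simp
    ring
  have htilt : (α / p) ^ m * ((1 - α) / (1 - p)) ^ (n - m) * ((1 - p) / (1 - α)) ^ n = x ^ m := by
    rw [← Nat.add_sub_cancel' hmn.le, pow_add, Nat.add_sub_cancel_left]
    calc (α / p) ^ m * ((1 - α) / (1 - p)) ^ (n - m) *
          (((1 - p) / (1 - α)) ^ m * ((1 - p) / (1 - α)) ^ (n - m))
        = (α / p * ((1 - p) / (1 - α))) ^ m *
            ((1 - α) / (1 - p) * ((1 - p) / (1 - α))) ^ (n - m) := by rw [mul_pow, mul_pow]; ring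
      _ = x ^ m := by
        rw [div_mul_div_cancel₀ h1p.ne', div_self h1α.ne', one_pow, mul_one]
  have hmarkov := card_filter_le_mul_pow_le_sum univ (fun ω : Fin n → Ω ↦ #{i | ω i ∈ E}) m
    hx0.le hx1
  rw [sum_pow_card_filter_mem, hmgf, ← htilt, mul_pow (Fintype.card Ω : ℝ)] at hmarkov
  exact le_of_mul_le_mul_right (by simpa only [mul_assoc] using hmarkov) (by positivity)

end Chernoff

theorem two_rpow_mul_relEntropy_eq {n m : ℕ} {p : ℝ} (hm : 0 < m) (hmn : m < n) (hp0 : 0 < p)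
    (hp1 : p < 1) :
    (2 : ℝ) ^ (n * ((m / n : ℝ) * logb 2 ((m / n : ℝ) / p) +
        (1 - m / n : ℝ) * logb 2 ((1 - m / n : ℝ) / (1 - p)))) =
      ((m / n : ℝ) / p) ^ m * ((1 - m / n : ℝ) / (1 - p)) ^ (n - m) := by
  have hn : (0 : ℝ) < n := by exact_mod_cast hm.trans hmn
  have hα0 : (0 : ℝ) < m / n := div_pos (by exact_mod_cast hm) hn
  have hα1 : (m / n : ℝ) < 1 := (div_lt_one hn).2 (by exact_mod_cast hmn)
  have hexp : n * ((m / n : ℝ) * logb 2 ((m / n : ℝ) / p) +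
        (1 - m / n : ℝ) * logb 2 ((1 - m / n : ℝ) / (1 - p))) =
      logb 2 (((m / n : ℝ) / p) ^ m * ((1 - m / n : ℝ) / (1 - p)) ^ (n - m)) := by
    rw [logb_mul (by positivity) (pow_ne_zero _ (div_pos (sub_pos.2 hα1) (sub_pos.2 hp1)).ne'),
      logb_pow, logb_pow, Nat.cast_sub hmn.le]
    field_simp
  rw [hexp, rpow_logb two_pos (by norm_num)
    (mul_pos (pow_pos (div_pos hα0 hp0) _) (pow_pos (div_pos (sub_pos.2 hα1) (sub_pos.2 hp1)) _))]

theorem Finset.exists_card_sub_le_card_forall_not_subset {ι : Type*} [Fintype ι] [DecidableEq ι]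
    (𝓑 : Finset (Finset ι)) (h𝓑 : ∀ S ∈ 𝓑, S.Nonempty) :
    ∃ R : Finset ι, Fintype.card ι - #𝓑 ≤ #R ∧ ∀ S ∈ 𝓑, ¬S ⊆ R := by
  choose f hf using h𝓑
  refine ⟨(𝓑.attach.image fun S ↦ f S.1 S.2)ᶜ, ?_, fun S hS hSR ↦ ?_⟩
  · rw [card_compl]
    exact Nat.sub_le_sub_left (card_image_le.trans (card_attach).le) _
  · exact mem_compl.1 (hSR (hf S hS)) (mem_image.2 ⟨⟨S, hS⟩, mem_attach _ _, rfl⟩)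

theorem card_filter_comp_embedding {κ ι A : Type*} [Fintype κ] [Fintype ι] [Fintype A]
    [DecidableEq κ] [DecidableEq ι] (g : κ ↪ ι) (Q : (κ → A) → Prop) [DecidablePred Q] :
    #{ω : ι → A | Q (ω ∘ g)} = #{v | Q v} * Fintype.card A ^ (Fintype.card ι - Fintype.card κ) := by
  classical
  let F : (ι → A) ≃ (κ → A) × ({i // i ∉ Set.range g} → A) :=
    (Equiv.piEquivPiSubtypeProd (· ∈ Set.range g) fun _ ↦ A).trans
      ((Equiv.arrowCongr (Equiv.ofInjective g g.injective) (Equiv.refl A)).symm.prodCongr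
        (Equiv.refl _))
  calc #{ω : ι → A | Q (ω ∘ g)} = #(({v | Q v} : Finset (κ → A)) ×ˢ univ) :=
        card_equiv F fun ω ↦ by
          simp only [mem_filter, mem_univ, true_and, mem_product, and_true]; rfl
    _ = _ := by
      rw [card_product, card_univ, Fintype.card_fun, Fintype.card_subtype_compl,
        Set.card_range_of_injective g.injective]

section Sampling

variable {n : ℕ}

def trifferCountOn {ι : Type*} (ω : ι → Fin n → Fin 3) (S : Finset ι) : ℕ :=
  #{i | S.image (fun s ↦ ω s i) = univ}

theorem trifferCountOn_triple {ι : Type*} [DecidableEq ι] (ω : ι → Fin n → Fin 3) (i j k : ι) :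
    trifferCountOn ω {i, j, k} = trifferCount (ω i) (ω j) (ω k) := by
  simp [trifferCountOn, trifferCount, Triffers, image_insert]

theorem trifferCountOn_map {κ ι : Type*} (ω : ι → Fin n → Fin 3) (g : κ ↪ ι) (S : Finset κ) :
    trifferCountOn ω (S.map g) = trifferCountOn (ω ∘ g) S := by
  classical
  simp [trifferCountOn, map_eq_image, image_image, Function.comp_def]

theorem trifferCount_self_left (a c : Fin n → Fin 3) : trifferCount a a c = 0 := by
  refine card_eq_zero.2 (filter_eq_empty_iff.2 fun i _ h ↦ ?_)
  have := congrArg card h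
  rw [insert_eq_self.2 (mem_insert_self _ _), card_univ, Fintype.card_fin] at this
  have := card_le_two (a := a i) (b := c i)
  omega

def badTriples {t : ℕ} (ω : Fin t → Fin n → Fin 3) (m : ℕ) : Finset (Finset (Fin t)) :=
  {S ∈ powersetCard 3 univ | trifferCountOn ω S < m}

theorem sum_card_badTriples (t m : ℕ) :
    ∑ ω : Fin t → Fin n → Fin 3, #(badTriples ω m) =
      t.choose 3 *
        (#{v : Fin 3 → Fin n → Fin 3 | trifferCountOn v univ < m} * (3 ^ n) ^ (t - 3)) := by
  calc ∑ ω : Fin t → Fin n → Fin 3, #(badTriples ω m)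
      = ∑ S ∈ powersetCard 3 univ, #{ω : Fin t → Fin n → Fin 3 | trifferCountOn ω S < m} :=
        sum_card_bipartiteAbove_eq_sum_card_bipartiteBelow _
    _ = ∑ S ∈ powersetCard 3 (univ : Finset (Fin t)),
          #{v : Fin 3 → Fin n → Fin 3 | trifferCountOn v univ < m} * (3 ^ n) ^ (t - 3) := by
        refine sum_congr rfl fun S hS ↦ ?_
        have h3 := (mem_powersetCard.1 hS).2
        rw [← map_orderEmbOfFin_univ S h3]
        simp_rw [trifferCountOn_map]
        exact (card_filter_comp_embedding _ fun v ↦ trifferCountOn v univ < m).trans (by simp)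
    _ = _ := by rw [sum_const, card_powersetCard, card_univ, Fintype.card_fin, smul_eq_mul]

theorem exists_three_mul_card_badTriples_le {m t : ℕ} {P : ℝ}
    (hNb : #{v : Fin 3 → Fin n → Fin 3 | trifferCountOn v univ < m} * P ≤ (27 : ℝ) ^ n)
    (ht : (t : ℝ) ^ 2 ≤ 2 * P) :
    ∃ ω : Fin t → Fin n → Fin 3, 3 * #(badTriples ω m) ≤ t := by
  suffices h : ∑ ω : Fin t → Fin n → Fin 3, 3 * #(badTriples ω m) ≤
      ∑ _ω : Fin t → Fin n → Fin 3, t by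
    obtain ⟨ω, -, hω⟩ := exists_le_of_sum_le univ_nonempty h
    exact ⟨ω, hω⟩
  rw [← mul_sum, sum_card_badTriples, sum_const, card_univ, smul_eq_mul]
  simp only [Fintype.card_fun, Fintype.card_fin]
  set Nb := #{v : Fin 3 → Fin n → Fin 3 | trifferCountOn v univ < m}
  rcases lt_or_ge t 3 with ht3 | ht3
  · simp [Nat.choose_eq_zero_of_lt ht3]
  have key : 3 * t.choose 3 * Nb ≤ t * 27 ^ n := by
    have hchoose : (t.choose 3 : ℝ) ≤ t ^ 3 / 6 := by
      simpa [Nat.factorial] using Nat.choose_le_pow_div (α := ℝ) 3 t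
    have : (3 * t.choose 3 * Nb : ℝ) ≤ t * 27 ^ n :=
      calc (3 * t.choose 3 * Nb : ℝ) ≤ 3 * (t ^ 3 / 6) * Nb := by gcongr
        _ = t * (t ^ 2 / 2) * Nb := by ring
        _ ≤ t * P * Nb := by gcongr; linarith
        _ ≤ t * 27 ^ n := by rw [mul_assoc, mul_comm P]; gcongr
    exact_mod_cast this
  have h27 : (3 ^ n) ^ 3 = 27 ^ n := by rw [← pow_mul, mul_comm, pow_mul]; norm_num
  rw [← pow_mul_pow_sub _ ht3, h27]
  calc 3 * (t.choose 3 * (Nb * (3 ^ n) ^ (t - 3))) = 3 * t.choose 3 * Nb * (3 ^ n) ^ (t - 3) := by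
        ring
    _ ≤ t * 27 ^ n * (3 ^ n) ^ (t - 3) := by gcongr
    _ = _ := by ring

theorem isTrifferent_of_card_le_two {m : ℕ} {C : Finset (Fin n → Fin 3)} (hC : #C ≤ 2) :
    IsTrifferent m C := fun a ha b hb c hc hab hac hbc ↦
  absurd (two_lt_card_iff.2 ⟨a, b, c, ha, hb, hc, hab, hac, hbc⟩) hC.not_gt

section Alteration

variable {m t : ℕ} {ω : Fin t → Fin n → Fin 3} {R : Finset (Fin t)}

theorem mem_badTriples_of_trifferCount_lt {i j k : Fin t} (hij : i ≠ j) (hik : i ≠ k)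
    (hjk : j ≠ k) (h : trifferCount (ω i) (ω j) (ω k) < m) : {i, j, k} ∈ badTriples ω m :=
  mem_filter.2 ⟨mem_powersetCard.2 ⟨subset_univ _, card_eq_three.2 ⟨i, j, k, hij, hik, hjk, rfl⟩⟩,
    (trifferCountOn_triple ω i j k).symm ▸ h⟩

theorem isTrifferent_image_of_forall_not_subset (hR : ∀ S ∈ badTriples ω m, ¬S ⊆ R) :
    IsTrifferent m (R.image ω) := by
  intro a ha b hb c hc hab hac hbc
  obtain ⟨i, hi, rfl⟩ := mem_image.1 ha
  obtain ⟨j, hj, rfl⟩ := mem_image.1 hb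
  obtain ⟨k, hk, rfl⟩ := mem_image.1 hc
  by_contra! h
  refine hR _ (mem_badTriples_of_trifferCount_lt ?_ ?_ ?_ h) (insert_subset hi
    (insert_subset hj (singleton_subset_iff.2 hk)))
  · rintro rfl; exact hab rfl
  · rintro rfl; exact hac rfl
  · rintro rfl; exact hbc rfl

-- a repeated word never triffers, so a triple through it is bad
theorem injOn_of_forall_not_subset (hm : 0 < m) (hR : ∀ S ∈ badTriples ω m, ¬S ⊆ R)
    (hR3 : 3 ≤ #R) : Set.InjOn ω R := by
  intro i hi j hj hij
  by_contra hne
  obtain ⟨k, hk, hkij⟩ := exists_mem_notMem_of_card_lt_card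
    ((card_le_two (a := i) (b := j)).trans_lt hR3)
  simp only [mem_insert, mem_singleton, not_or] at hkij
  refine hR _ (mem_badTriples_of_trifferCount_lt hne (Ne.symm hkij.1) (Ne.symm hkij.2) ?_)
    (insert_subset hi (insert_subset hj (singleton_subset_iff.2 hk)))
  rwa [hij, trifferCount_self_left]

theorem exists_isTrifferent_card_le (hn : 0 < n) (hm : 0 < m)
    (hR : ∀ S ∈ badTriples ω m, ¬S ⊆ R) :
    ∃ C : Finset (Fin n → Fin 3), IsTrifferent m C ∧ #R ≤ #C := by
  by_cases hR3 : 3 ≤ #R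
  · exact ⟨R.image ω, isTrifferent_image_of_forall_not_subset hR,
      (card_image_of_injOn (injOn_of_forall_not_subset hm hR hR3)).ge⟩
  · have h3n : #R ≤ #(univ : Finset (Fin n → Fin 3)) := by
      rw [card_univ, Fintype.card_fun, Fintype.card_fin, Fintype.card_fin]
      have := Nat.one_lt_pow hn.ne' (by norm_num : 1 < 3)
      omega
    obtain ⟨C, -, hC⟩ := exists_subset_card_eq h3n
    exact ⟨C, isTrifferent_of_card_le_two (by omega), hC.ge⟩

end Alteration

theorem exists_isTrifferent_two_mul_le (hn : 0 < n) {m t : ℕ} (hm : 0 < m) {P : ℝ}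
    (hNb : #{v : Fin 3 → Fin n → Fin 3 | trifferCountOn v univ < m} * P ≤ (27 : ℝ) ^ n)
    (ht : (t : ℝ) ^ 2 ≤ 2 * P) :
    ∃ C : Finset (Fin n → Fin 3), IsTrifferent m C ∧ 2 * t ≤ 3 * #C := by
  obtain ⟨ω, hω⟩ := exists_three_mul_card_badTriples_le hNb ht
  obtain ⟨R, hRcard, hR⟩ := (badTriples ω m).exists_card_sub_le_card_forall_not_subset
    fun S hS ↦ card_pos.1 (by rw [(mem_powersetCard.1 (mem_filter.1 hS).1).2]; norm_num)
  obtain ⟨C, hC, hRC⟩ := exists_isTrifferent_card_le hn hm hR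
  rw [Fintype.card_fin] at hRcard
  exact ⟨C, hC, by omega⟩

theorem card_trifferCountOn_lt_mul_le {m : ℕ} (hm : 0 < m) (hmn : 9 * m < 2 * n) :
    #{v : Fin 3 → Fin n → Fin 3 | trifferCountOn v univ < m} *
        (((m / n : ℝ) / (2 / 9)) ^ m * ((1 - m / n : ℝ) / (1 - 2 / 9)) ^ (n - m)) ≤
      (27 : ℝ) ^ n := by
  -- at each position the three words form a map `Fin 3 → Fin 3`, which triffers iff it is onto
  let E : Finset (Fin 3 → Fin 3) := {u | univ.image u = univ}
  have hE : (#E : ℝ) = 2 / 9 * Fintype.card (Fin 3 → Fin 3) := by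
    rw [show #E = 6 by decide]
    norm_num
  have hn : (0 : ℝ) < n := by exact_mod_cast (show 0 < n by omega)
  have hmp : (m / n : ℝ) ≤ 2 / 9 := by
    rw [div_le_iff₀ hn]
    linarith [show (9 * m : ℝ) < 2 * n by exact_mod_cast hmn]
  have hcount : #{v : Fin 3 → Fin n → Fin 3 | trifferCountOn v univ < m} =
      #{ω : Fin n → Fin 3 → Fin 3 | #{i | ω i ∈ E} < m} :=
    card_equiv (Equiv.piComm _) fun v ↦ by simp only [mem_filter, mem_univ, true_and, E]; rfl
  have hP : (0 : ℝ) ≤ ((m / n : ℝ) / (2 / 9)) ^ m * ((1 - m / n : ℝ) / (1 - 2 / 9)) ^ (n - m) := by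
    have : (m / n : ℝ) ≤ 1 := by linarith
    positivity
  calc _ ≤ (#{ω : Fin n → Fin 3 → Fin 3 | #{i | ω i ∈ E} ≤ m} : ℝ) *
        (((m / n : ℝ) / (2 / 9)) ^ m * ((1 - m / n : ℝ) / (1 - 2 / 9)) ^ (n - m)) := by
        rw [hcount]
        gcongr
        exact Nat.le_of_lt
    _ ≤ (Fintype.card (Fin 3 → Fin 3) : ℝ) ^ n :=
        card_filter_card_mem_le_mul_le E hm (by omega) hE hmp (by norm_num)
    _ = 27 ^ n := by simp

end Sampling

theorem card_le_T {n m : ℕ} {C : Finset (Fin n → Fin 3)} (hC : IsTrifferent m C) : #C ≤ T n m :=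
  le_csSup ⟨Fintype.card (Fin n → Fin 3), by rintro _ ⟨D, -, rfl⟩; exact card_le_univ D⟩
    ⟨C, hC, rfl⟩

theorem stmt13 (n m : ℕ) (hm : 1 ≤ m) (hmn : 9 * m < 2 * n) :
    2 * Real.sqrt 2 / 3 *
        (2 : ℝ) ^ ((n : ℝ) *
          ((m / n : ℝ) * Real.logb 2 ((m / n : ℝ) / (2 / 9)) +
            (1 - (m / n : ℝ)) * Real.logb 2 ((1 - (m / n : ℝ)) / (7 / 9))) / 2) - 1
      ≤ (T n m : ℝ) := by
  set P : ℝ := ((m / n : ℝ) / (2 / 9)) ^ m * ((1 - m / n : ℝ) / (1 - 2 / 9)) ^ (n - m)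
  have hentropy : (2 : ℝ) ^ ((n : ℝ) *
      ((m / n : ℝ) * logb 2 ((m / n : ℝ) / (2 / 9)) +
        (1 - (m / n : ℝ)) * logb 2 ((1 - (m / n : ℝ)) / (7 / 9)))) = P := by
    rw [show (7 / 9 : ℝ) = 1 - 2 / 9 by norm_num]
    exact two_rpow_mul_relEntropy_eq hm (by omega) (by norm_num) (by norm_num)
  have hP : 0 < P := hentropy ▸ rpow_pos_of_pos two_pos _
  set t := ⌊√(2 * P)⌋₊
  have ht : (t : ℝ) ^ 2 ≤ 2 * P := by
    calc (t : ℝ) ^ 2 ≤ √(2 * P) ^ 2 := by gcongr; exact Nat.floor_le (sqrt_nonneg _)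
      _ = 2 * P := sq_sqrt (by positivity)
  obtain ⟨C, hC, htC⟩ := exists_isTrifferent_two_mul_le (by omega) hm
    (card_trifferCountOn_lt_mul_le hm hmn) ht
  have htC' : (2 * t : ℝ) ≤ 3 * #C := by exact_mod_cast htC
  have hCT : (#C : ℝ) ≤ T n m := by exact_mod_cast card_le_T hC
  rw [div_eq_mul_one_div _ (2 : ℝ), rpow_mul zero_le_two, hentropy, ← sqrt_eq_rpow]
  calc 2 * √2 / 3 * √P - 1 = 2 / 3 * √(2 * P) - 1 := by rw [sqrt_mul zero_le_two]; ring
    _ ≤ 2 / 3 * (t + 1) - 1 := by gcongr; exact (Nat.lt_floor_add_one _).le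
    _ ≤ T n m := by linarith
end
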